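/- Let $\Omega \subseteq \mathbb{R}^N$ be a domain with finite measure, $T > 0$, $Q = \Omega\times(0,T)$, $1 \leq p < \infty$ constant, and $p : \Omega \to [1, p]$, i.e. a variable exponent with $p^+ \leq p$. If $u \in L^{p^+}(0,T; L^{p(x)}(\Omega))$ (Bochner sense) then its space-time representative $P^{-1}u$ belongs to $L^{p(x)}(Q)$ and $\|P^{-1}u\|_{L^{p(x)}(Q)} \leq C\,(\|u\|_{L^{p^+}(0,T;L^{p(x)}(\Omega))} + 1)$ for some constant $C$ depending only on $T$ and $p^\pm$. -/

import Mathlib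

open MeasureTheory Filter Set
open scoped ENNReal Topology

noncomputable section

/-- The modular of a variable exponent Lebesgue space. -/
def vModular {α : Type*} [MeasurableSpace α] (μ : Measure α) (p : α → ℝ) (u : α → ℝ) : ℝ≥0∞ :=
  ∫⁻ x, ENNReal.ofReal (|u x| ^ p x) ∂μ

/-- Membership in the variable exponent Lebesgue space `L^{p(x)}`. -/
def MemVLp {α : Type*} [MeasurableSpace α] (μ : Measure α) (p : α → ℝ) (u : α → ℝ) : Prop :=
  AEMeasurable u μ ∧ vModular μ p u < ⊤

/-- The Luxemburg norm on the variable exponent Lebesgue space. -/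
def luxNorm {α : Type*} [MeasurableSpace α] (μ : Measure α) (p : α → ℝ) (u : α → ℝ) : ℝ :=
  sInf {lam : ℝ | 0 < lam ∧ vModular μ p (fun x => u x / lam) ≤ 1}

/-- The product measure on the space-time cylinder `Ω × (0,T)`. -/
def QTmeas {N : ℕ} (Ω : Set (Fin N → ℝ)) (T : ℝ) : Measure ((Fin N → ℝ) × ℝ) :=
  (volume.restrict Ω).prod (volume.restrict (Set.Ioo (0:ℝ) T))

/-!
For `1 ≤ p(x) ≤ q`, comparing `v / λ` with `v / s` for any `s > ‖v‖` gives the slice estimate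
`ρ(v / λ) ≤ ‖v‖ / λ + (‖v‖ / λ) ^ q`. By Tonelli the space-time modular of `u / λ` is the time
integral of the slice modulars, and with `n(t) = ‖u(t)‖`, `K = (∫ n ^ q) ^ (1 / q)` and
`λ = (T + 2) (K + 1)` the bound `y / c + (y / c) ^ q ≤ (1 + 2 y ^ q) / c` for `y = n / (K + 1)`,
`c = T + 2` makes that integral at most `1`.
-/

theorem rpow_le_add_rpow {r e q : ℝ} (hr : 0 ≤ r) (he : 1 ≤ e) (heq : e ≤ q) :
    r ^ e ≤ r + r ^ q := by
  rcases le_total r 1 with h | h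
  · have := Real.rpow_le_rpow_of_exponent_ge' hr h (by linarith) he
    rw [Real.rpow_one] at this
    linarith [Real.rpow_nonneg hr q]
  · linarith [Real.rpow_le_rpow_of_exponent_le h heq]

theorem div_add_div_rpow_le {y c q : ℝ} (hy : 0 ≤ y) (hc : 1 ≤ c) (hq : 1 ≤ q) :
    y / c + (y / c) ^ q ≤ (1 + 2 * y ^ q) / c := by
  have hc0 : 0 < c := by linarith
  have hyq : y ≤ 1 + y ^ q := by
    rcases le_total y 1 with h | h
    · linarith [Real.rpow_nonneg hy q]
    · linarith [Real.self_le_rpow_of_one_le h hq]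
  have hcq : c ≤ c ^ q := Real.self_le_rpow_of_one_le hc hq
  have hpow : (y / c) ^ q ≤ y ^ q / c := by
    rw [Real.div_rpow hy hc0.le]
    exact div_le_div_of_nonneg_left (Real.rpow_nonneg hy q) hc0 hcq
  calc y / c + (y / c) ^ q ≤ (1 + y ^ q) / c + y ^ q / c := by gcongr
    _ = (1 + 2 * y ^ q) / c := by ring

section VariableExponent

variable {α : Type*} [MeasurableSpace α] {μ : Measure α} {p : α → ℝ} {v : α → ℝ}

theorem luxNorm_nonneg : 0 ≤ luxNorm μ p v :=
  Real.sInf_nonneg fun _ hlam => hlam.1.le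

theorem luxNorm_le_of_vModular_div_le_one {lam : ℝ} (hlam : 0 < lam)
    (h : vModular μ p (fun x => v x / lam) ≤ 1) : luxNorm μ p v ≤ lam :=
  csInf_le ⟨0, fun _ hs => hs.1.le⟩ ⟨hlam, h⟩

theorem vModular_const_mul_le {a K : ℝ} (h : ∀ᵐ x ∂μ, |a| ^ p x ≤ K) :
    vModular μ p (fun x => a * v x) ≤ ENNReal.ofReal K * vModular μ p v := by
  rw [vModular, vModular, ← lintegral_const_mul' _ _ ENNReal.ofReal_ne_top]
  refine lintegral_mono_ae (h.mono fun x hx => ?_)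
  rw [← ENNReal.ofReal_mul' (by positivity), abs_mul, Real.mul_rpow (abs_nonneg a) (abs_nonneg _)]
  exact ENNReal.ofReal_le_ofReal (mul_le_mul_of_nonneg_right hx (by positivity))

theorem vModular_div_le_one_of_luxNorm_lt (hv : MemVLp μ p v) (hp : ∀ᵐ x ∂μ, 1 ≤ p x) {s : ℝ}
    (hs : luxNorm μ p v < s) : vModular μ p (fun x => v x / s) ≤ 1 := by
  set M := (vModular μ p v).toReal
  have hM : 0 ≤ M := ENNReal.toReal_nonneg
  have hwitness : vModular μ p (fun x => v x / (M + 1)) ≤ 1 := by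
    have hsmall : ∀ᵐ x ∂μ, |(M + 1)⁻¹| ^ p x ≤ (M + 1)⁻¹ := hp.mono fun x hx => by
      rw [abs_of_pos (by positivity)]
      simpa using Real.rpow_le_rpow_of_exponent_ge (by positivity)
        (inv_le_one_of_one_le₀ (by linarith)) hx
    calc vModular μ p (fun x => v x / (M + 1))
        ≤ ENNReal.ofReal (M + 1)⁻¹ * vModular μ p v := by
          simpa only [div_eq_inv_mul] using vModular_const_mul_le hsmall
      _ = ENNReal.ofReal (M / (M + 1)) := by
          rw [← ENNReal.ofReal_toReal hv.2.ne, ← ENNReal.ofReal_mul (by positivity),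
            inv_mul_eq_div]
      _ ≤ 1 := ENNReal.ofReal_le_one.mpr ((div_le_one (by positivity)).mpr (by linarith))
  have hM1 : (0 : ℝ) < M + 1 := by linarith
  obtain ⟨s', ⟨hs'0, hs'⟩, hs's⟩ :=
    exists_lt_of_csInf_lt (s := {lam : ℝ | 0 < lam ∧ vModular μ p (fun x => v x / lam) ≤ 1})
      ⟨M + 1, hM1, hwitness⟩ hs
  have hs0 : 0 < s := hs'0.trans hs's
  have hscale : (fun x => v x / s) = fun x => s' / s * (v x / s') := by
    funext x; field_simp
  have hle : ∀ᵐ x ∂μ, |s' / s| ^ p x ≤ 1 := hp.mono fun x hx => by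
    rw [abs_of_pos (by positivity)]
    exact Real.rpow_le_one (by positivity) ((div_le_one (by linarith)).mpr hs's.le) (by linarith)
  calc vModular μ p (fun x => v x / s) ≤ ENNReal.ofReal 1 * vModular μ p (fun x => v x / s') := by
        rw [hscale]; exact vModular_const_mul_le hle
    _ ≤ 1 := by simpa using hs'

theorem vModular_div_le_of_luxNorm_lt (hv : MemVLp μ p v) {q : ℝ}
    (hp : ∀ᵐ x ∂μ, 1 ≤ p x ∧ p x ≤ q) {lam s : ℝ} (hlam : 0 < lam) (hs : luxNorm μ p v < s) :
    vModular μ p (fun x => v x / lam) ≤ ENNReal.ofReal (s / lam + (s / lam) ^ q) := by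
  have hs0 : 0 < s := luxNorm_nonneg.trans_lt hs
  have hscale : (fun x => v x / lam) = fun x => s / lam * (v x / s) := by
    funext x; field_simp
  have hbound : ∀ᵐ x ∂μ, |s / lam| ^ p x ≤ s / lam + (s / lam) ^ q := hp.mono fun x hx => by
    rw [abs_of_pos (by positivity)]
    exact rpow_le_add_rpow (by positivity) hx.1 hx.2
  calc vModular μ p (fun x => v x / lam)
      ≤ ENNReal.ofReal (s / lam + (s / lam) ^ q) * vModular μ p (fun x => v x / s) := by
        rw [hscale]; exact vModular_const_mul_le hbound
    _ ≤ ENNReal.ofReal (s / lam + (s / lam) ^ q) := by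
        simpa using mul_le_mul_right
          (vModular_div_le_one_of_luxNorm_lt hv (hp.mono fun x hx => hx.1) hs) _

theorem vModular_div_le_luxNorm (hv : MemVLp μ p v) {q : ℝ} (hq : 0 ≤ q)
    (hp : ∀ᵐ x ∂μ, 1 ≤ p x ∧ p x ≤ q) {lam : ℝ} (hlam : 0 < lam) :
    vModular μ p (fun x => v x / lam) ≤
      ENNReal.ofReal (luxNorm μ p v / lam + (luxNorm μ p v / lam) ^ q) := by
  have hcont : Continuous fun s : ℝ => ENNReal.ofReal (s / lam + (s / lam) ^ q) :=
    ENNReal.continuous_ofReal.comp (by fun_prop (disch := exact fun _ => Or.inr hq))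
  exact ge_of_tendsto (hcont.continuousWithinAt.tendsto (s := Ioi (luxNorm μ p v)))
    (eventually_nhdsWithin_of_forall fun s hs => vModular_div_le_of_luxNorm_lt hv hp hlam hs)

end VariableExponent

theorem vModular_prod {α β : Type*} [MeasurableSpace α] [MeasurableSpace β]
    {μ : Measure α} {ν : Measure β} [SFinite μ] [SFinite ν] {p : α → ℝ} (hp : Measurable p)
    {u : α × β → ℝ} (hu : AEMeasurable u (μ.prod ν)) :
    vModular (μ.prod ν) (fun z => p z.1) u = ∫⁻ t, vModular μ p (fun x => u (x, t)) ∂ν :=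
  lintegral_prod_symm _ (by fun_prop)

section Time

variable {β : Type*} [MeasurableSpace β] {ν : Measure β} [IsFiniteMeasure ν] {n : β → ℝ} {q : ℝ}

theorem lintegral_ofReal_div_add_div_rpow_le (hn : ∀ t, 0 ≤ n t) (hq : 1 ≤ q)
    (hint : Integrable (fun t => n t ^ q) ν) {c : ℝ} (hc : 1 ≤ c) :
    ∫⁻ t, ENNReal.ofReal (n t / c + (n t / c) ^ q) ∂ν ≤
      ENNReal.ofReal ((ν.real univ + 2 * ∫ t, n t ^ q ∂ν) / c) := by
  have hint' : Integrable (fun t => (1 + 2 * n t ^ q) / c) ν :=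
    ((integrable_const 1).add (hint.const_mul 2)).div_const c
  calc ∫⁻ t, ENNReal.ofReal (n t / c + (n t / c) ^ q) ∂ν
      ≤ ∫⁻ t, ENNReal.ofReal ((1 + 2 * n t ^ q) / c) ∂ν :=
        lintegral_mono fun t => ENNReal.ofReal_le_ofReal (div_add_div_rpow_le (hn t) hc hq)
    _ = ENNReal.ofReal (∫ t, (1 + 2 * n t ^ q) / c ∂ν) :=
        (ofReal_integral_eq_lintegral_ofReal hint'
          (Eventually.of_forall fun t =>
            div_nonneg (by linarith [Real.rpow_nonneg (hn t) q]) (by linarith))).symm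
    _ = ENNReal.ofReal ((ν.real univ + 2 * ∫ t, n t ^ q ∂ν) / c) := by
        rw [integral_div, integral_add (integrable_const 1) (hint.const_mul 2), integral_const,
          integral_const_mul, smul_eq_mul, mul_one]

theorem lintegral_ofReal_div_add_div_rpow_le_one (hn : ∀ t, 0 ≤ n t) (hq : 1 ≤ q)
    (hint : Integrable (fun t => n t ^ q) ν) :
    let lam := (ν.real univ + 2) * ((∫ t, n t ^ q ∂ν) ^ (1 / q) + 1)
    ∫⁻ t, ENNReal.ofReal (n t / lam + (n t / lam) ^ q) ∂ν ≤ 1 := by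
  intro lam
  set A := ∫ t, n t ^ q ∂ν
  set b := A ^ (1 / q) + 1
  have hA : 0 ≤ A := integral_nonneg fun t => Real.rpow_nonneg (hn t) q
  have hb : 0 < b := by positivity
  have hAb : A ≤ b ^ q := by
    calc A = (A ^ (1 / q)) ^ q := by rw [one_div, Real.rpow_inv_rpow hA (by linarith)]
      _ ≤ b ^ q := Real.rpow_le_rpow (by positivity) (by linarith) (by linarith)
  have hnb : ∫ t, (n t / b) ^ q ∂ν ≤ 1 := by
    simp_rw [Real.div_rpow (hn _) hb.le]
    rw [integral_div]
    exact (div_le_one (by positivity)).mpr hAb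
  have hlam : ∀ t, n t / lam = n t / b / (ν.real univ + 2) := fun t => by
    rw [div_div, mul_comm]
  simp_rw [hlam]
  refine (lintegral_ofReal_div_add_div_rpow_le (fun t => div_nonneg (hn t) hb.le) hq
    (by simpa only [Real.div_rpow (hn _) hb.le] using hint.div_const (b ^ q))
    (by linarith [measureReal_nonneg (μ := ν) (s := univ)])).trans ?_
  rw [ENNReal.ofReal_le_one, div_le_one (by positivity)]
  linarith

end Time

theorem bochner_to_spacetime_general {N : ℕ} (Ω : Set (Fin N → ℝ)) (T : ℝ)
    (pe : (Fin N → ℝ) → ℝ) (hpe : Measurable pe) (pp : ℝ) (h1 : 1 ≤ pp)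
    (hae : ∀ᵐ x ∂(volume.restrict Ω), 1 ≤ pe x ∧ pe x ≤ pp) :
    ∃ C : ℝ, 0 ≤ C ∧
      ∀ u : (Fin N → ℝ) × ℝ → ℝ,
        AEMeasurable u (QTmeas Ω T) →
        (∀ᵐ t ∂(volume.restrict (Set.Ioo (0:ℝ) T)),
          MemVLp (volume.restrict Ω) pe fun x => u (x, t)) →
        IntegrableOn
          (fun t => (luxNorm (volume.restrict Ω) pe fun x => u (x, t)) ^ pp)
          (Set.Ioo (0:ℝ) T) →
        MemVLp (QTmeas Ω T) (fun z => pe z.1) u ∧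
        luxNorm (QTmeas Ω T) (fun z => pe z.1) u
          ≤ C * ((∫ t in Set.Ioo (0:ℝ) T,
              (luxNorm (volume.restrict Ω) pe fun x => u (x, t)) ^ pp) ^ (1 / pp) + 1) := by
  set ν := volume.restrict (Ioo (0 : ℝ) T)
  have hC : 0 < ν.real univ + 2 := by linarith [measureReal_nonneg (μ := ν) (s := univ)]
  refine ⟨ν.real univ + 2, hC.le, fun u hu hslice hint => ?_⟩
  set n := fun t => luxNorm (volume.restrict Ω) pe fun x => u (x, t)
  have hn : ∀ t, 0 ≤ n t := fun t => luxNorm_nonneg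
  have hK : 0 < (∫ t, n t ^ pp ∂ν) ^ (1 / pp) + 1 := by
    linarith [Real.rpow_nonneg (integral_nonneg (μ := ν) fun t => Real.rpow_nonneg (hn t) pp) (1 / pp)]
  have hmod : ∀ lam, 0 < lam → vModular (QTmeas Ω T) (fun z => pe z.1) (fun z => u z / lam) ≤
      ∫⁻ t, ENNReal.ofReal (n t / lam + (n t / lam) ^ pp) ∂ν := fun lam hlam => by
    rw [QTmeas, vModular_prod hpe (hu.div_const lam)]
    exact lintegral_mono_ae (hslice.mono fun t ht =>
      vModular_div_le_luxNorm ht (by linarith) hae hlam)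
  refine ⟨⟨hu, ?_⟩, luxNorm_le_of_vModular_div_le_one (mul_pos hC hK)
    ((hmod _ (mul_pos hC hK)).trans (lintegral_ofReal_div_add_div_rpow_le_one hn h1 hint))⟩
  simpa only [div_one] using (hmod 1 one_pos).trans_lt
    ((lintegral_ofReal_div_add_div_rpow_le hn h1 hint le_rfl).trans_lt ENNReal.ofReal_lt_top)

/-- a function of time belonging to the Bochner space
`L^{p⁺}(0,T; L^{p(x)}(Ω))` has its space-time representative in `L^{p(x)}(Q)`, with
`‖P⁻¹u‖_{L^{p(x)}(Q)} ≤ C(‖u‖_{L^{p⁺}(0,T;L^{p(x)}(Ω))} + 1)`. -/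
theorem bochner_to_spacetime {N : ℕ} (Ω : Set (Fin N → ℝ)) (hΩ : MeasurableSet Ω)
    (hΩfin : volume Ω < ⊤) (T : ℝ) (hT : 0 < T)
    (pe : (Fin N → ℝ) → ℝ) (hpe : Measurable pe) (pp : ℝ) (h1 : 1 ≤ pp)
    (hae : ∀ᵐ x ∂(volume.restrict Ω), 1 ≤ pe x ∧ pe x ≤ pp) :
    ∃ C : ℝ, 0 ≤ C ∧
      ∀ u : (Fin N → ℝ) × ℝ → ℝ,
        AEMeasurable u (QTmeas Ω T) →
        (∀ᵐ t ∂(volume.restrict (Set.Ioo (0:ℝ) T)),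
          MemVLp (volume.restrict Ω) pe fun x => u (x, t)) →
        IntegrableOn
          (fun t => (luxNorm (volume.restrict Ω) pe fun x => u (x, t)) ^ pp)
          (Set.Ioo (0:ℝ) T) →
        MemVLp (QTmeas Ω T) (fun z => pe z.1) u ∧
        luxNorm (QTmeas Ω T) (fun z => pe z.1) u
          ≤ C * ((∫ t in Set.Ioo (0:ℝ) T,
              (luxNorm (volume.restrict Ω) pe fun x => u (x, t)) ^ pp) ^ (1 / pp) + 1) :=
  bochner_to_spacetime_general Ω T pe hpe pp h1 hae
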